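/- Let k and c be natural numbers and let [y]_k = ∏_{j=0}^{k−1}(y+j). Then the following identity holds in the polynomial ring ℂ[z,a]: [z−a]_k·[z+a−c]_k·[z+c]_k·∏_{j=0}^{c−1}((z−a+k+j)(z+a−c+k+j))·∏_{j=0}^{2c−1}(z−c+j) = [z+a]_k·[z+c−a]_k·[z−c]_k·∏_{j=0}^{c−1}((z−a+j)(z+a−c+j))·∏_{j=0}^{2c−1}(z+k−c+j). Equivalently, under the specialization a₁ = a, a₂ = c−a (i.e. a₁+a₂ = c with c a non-negative integer), the function F_k(z) = ([z−a₁]_k·[z−a₂]_k·[z+a₁+a₂]_k)/([z+a₁]_k·[z+a₂]_k·[z−a₁−a₂]_k) equals the rational expression ∏_{j=0}^{c−1} ((z−a+j)(z+a−c+j))/((z−a+k+j)(z+a+k−c+j)) · ∏_{j=0}^{2c−1} (z+k−c+j)/(z−c+j), so that F_k(z) depends on the integer k through an explicit rational function of k. -/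
import Mathlib


open Finset

/-- The Pochhammer product `[y]_k = ∏_{j=0}^{k-1} (y + j)` in a commutative ring. -/
def poch {R : Type*} [CommRing R] (y : R) (k : ℕ) : R :=
  ∏ j ∈ Finset.range k, (y + (j : R))

/-- Splitting lemma: `[y]_{m+n} = [y]_m · ∏_{j<n} (y + m + j)`. -/
lemma poch_split {R : Type*} [CommRing R] (y : R) (m n : ℕ) :
    poch y (m + n) = poch y m * ∏ j ∈ Finset.range n, (y + (m : R) + (j : R)) := by
  rw [poch, Finset.prod_range_add]
  congr 1
  apply Finset.prod_congr rfl
  intro j _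
  push_cast
  ring

/-- In the polynomial ring `ℂ[z,a]` (here `z = X 0`, `a = X 1` in
`MvPolynomial (Fin 2) ℂ`), for all natural numbers `k, c` we have
`[z−a]_k·[z+a−c]_k·[z+c]_k·∏_{j<c}((z−a+k+j)(z+a−c+k+j))·∏_{j<2c}(z−c+j)
  = [z+a]_k·[z+c−a]_k·[z−c]_k·∏_{j<c}((z−a+j)(z+a−c+j))·∏_{j<2c}(z+k−c+j)`.
Equivalently, under the specialization `a₁ = a`, `a₂ = c − a` (so `a₁ + a₂ = c ∈ ℤ_{≥0}`),
the factor `F_k(z) = ([z−a₁]_k[z−a₂]_k[z+a₁+a₂]_k)/([z+a₁]_k[z+a₂]_k[z−a₁−a₂]_k)`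
becomes the explicit rational function
`∏_{j<c} ((z−a+j)(z+a−c+j))/((z−a+k+j)(z+a+k−c+j)) · ∏_{j<2c} (z+k−c+j)/(z−c+j)` of `k`. -/
theorem specialized_F_factor_identity (k c : ℕ) :
    let z : MvPolynomial (Fin 2) ℂ := MvPolynomial.X 0
    let a : MvPolynomial (Fin 2) ℂ := MvPolynomial.X 1
    poch (z - a) k * poch (z + a - (c : MvPolynomial (Fin 2) ℂ)) k *
        poch (z + (c : MvPolynomial (Fin 2) ℂ)) k *
        (∏ j ∈ Finset.range c,
          ((z - a + (k : MvPolynomial (Fin 2) ℂ) + (j : MvPolynomial (Fin 2) ℂ)) *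
            (z + a - (c : MvPolynomial (Fin 2) ℂ) + (k : MvPolynomial (Fin 2) ℂ) +
              (j : MvPolynomial (Fin 2) ℂ)))) *
        (∏ j ∈ Finset.range (2 * c),
          (z - (c : MvPolynomial (Fin 2) ℂ) + (j : MvPolynomial (Fin 2) ℂ))) =
      poch (z + a) k * poch (z + (c : MvPolynomial (Fin 2) ℂ) - a) k *
        poch (z - (c : MvPolynomial (Fin 2) ℂ)) k *
        (∏ j ∈ Finset.range c,
          ((z - a + (j : MvPolynomial (Fin 2) ℂ)) *
            (z + a - (c : MvPolynomial (Fin 2) ℂ) + (j : MvPolynomial (Fin 2) ℂ)))) *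
        (∏ j ∈ Finset.range (2 * c),
          (z + (k : MvPolynomial (Fin 2) ℂ) - (c : MvPolynomial (Fin 2) ℂ) +
            (j : MvPolynomial (Fin 2) ℂ))) := by
  intro z a
  -- split the paired products
  rw [Finset.prod_mul_distrib, Finset.prod_mul_distrib]
  -- LHS pieces
  have l1 : poch (z - a) k *
      ∏ j ∈ Finset.range c, (z - a + (k : MvPolynomial (Fin 2) ℂ) + (j : MvPolynomial (Fin 2) ℂ))
      = poch (z - a) (k + c) := (poch_split _ k c).symm
  have l2 : poch (z + a - (c : MvPolynomial (Fin 2) ℂ)) k *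
      ∏ j ∈ Finset.range c,
        (z + a - (c : MvPolynomial (Fin 2) ℂ) + (k : MvPolynomial (Fin 2) ℂ) +
          (j : MvPolynomial (Fin 2) ℂ))
      = poch (z + a - (c : MvPolynomial (Fin 2) ℂ)) (k + c) := (poch_split _ k c).symm
  have l3 : poch (z + (c : MvPolynomial (Fin 2) ℂ)) k *
      ∏ j ∈ Finset.range (2 * c),
        (z - (c : MvPolynomial (Fin 2) ℂ) + (j : MvPolynomial (Fin 2) ℂ))
      = poch (z - (c : MvPolynomial (Fin 2) ℂ)) (2 * c + k) := by
    rw [poch_split (z - (c : MvPolynomial (Fin 2) ℂ)) (2 * c) k, mul_comm]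
    congr 1
    unfold poch
    apply Finset.prod_congr rfl
    intro j _
    push_cast
    ring
  -- RHS pieces
  have r1 : poch (z + (c : MvPolynomial (Fin 2) ℂ) - a) k *
      ∏ j ∈ Finset.range c, (z - a + (j : MvPolynomial (Fin 2) ℂ))
      = poch (z - a) (k + c) := by
    rw [Nat.add_comm k c, poch_split (z - a) c k, mul_comm]
    congr 1
    unfold poch
    apply Finset.prod_congr rfl
    intro j _
    ring
  have r2 : poch (z + a) k *
      ∏ j ∈ Finset.range c,
        (z + a - (c : MvPolynomial (Fin 2) ℂ) + (j : MvPolynomial (Fin 2) ℂ))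
      = poch (z + a - (c : MvPolynomial (Fin 2) ℂ)) (k + c) := by
    rw [Nat.add_comm k c, poch_split (z + a - (c : MvPolynomial (Fin 2) ℂ)) c k, mul_comm]
    congr 1
    unfold poch
    apply Finset.prod_congr rfl
    intro j _
    ring
  have r3 : poch (z - (c : MvPolynomial (Fin 2) ℂ)) k *
      ∏ j ∈ Finset.range (2 * c),
        (z + (k : MvPolynomial (Fin 2) ℂ) - (c : MvPolynomial (Fin 2) ℂ) +
          (j : MvPolynomial (Fin 2) ℂ))
      = poch (z - (c : MvPolynomial (Fin 2) ℂ)) (2 * c + k) := by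
    rw [Nat.add_comm (2 * c) k, poch_split (z - (c : MvPolynomial (Fin 2) ℂ)) k (2 * c)]
    congr 1
    apply Finset.prod_congr rfl
    intro j _
    ring
  calc poch (z - a) k * poch (z + a - (c : MvPolynomial (Fin 2) ℂ)) k *
        poch (z + (c : MvPolynomial (Fin 2) ℂ)) k *
        ((∏ j ∈ Finset.range c,
            (z - a + (k : MvPolynomial (Fin 2) ℂ) + (j : MvPolynomial (Fin 2) ℂ))) *
          ∏ j ∈ Finset.range c,
            (z + a - (c : MvPolynomial (Fin 2) ℂ) + (k : MvPolynomial (Fin 2) ℂ) +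
              (j : MvPolynomial (Fin 2) ℂ))) *
        ∏ j ∈ Finset.range (2 * c),
          (z - (c : MvPolynomial (Fin 2) ℂ) + (j : MvPolynomial (Fin 2) ℂ))
      = (poch (z - a) k *
          ∏ j ∈ Finset.range c,
            (z - a + (k : MvPolynomial (Fin 2) ℂ) + (j : MvPolynomial (Fin 2) ℂ))) *
        (poch (z + a - (c : MvPolynomial (Fin 2) ℂ)) k *
          ∏ j ∈ Finset.range c,
            (z + a - (c : MvPolynomial (Fin 2) ℂ) + (k : MvPolynomial (Fin 2) ℂ) +
              (j : MvPolynomial (Fin 2) ℂ))) *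
        (poch (z + (c : MvPolynomial (Fin 2) ℂ)) k *
          ∏ j ∈ Finset.range (2 * c),
            (z - (c : MvPolynomial (Fin 2) ℂ) + (j : MvPolynomial (Fin 2) ℂ))) := by ring
    _ = poch (z - a) (k + c) * poch (z + a - (c : MvPolynomial (Fin 2) ℂ)) (k + c) *
          poch (z - (c : MvPolynomial (Fin 2) ℂ)) (2 * c + k) := by rw [l1, l2, l3]
    _ = (poch (z + (c : MvPolynomial (Fin 2) ℂ) - a) k *
          ∏ j ∈ Finset.range c, (z - a + (j : MvPolynomial (Fin 2) ℂ))) *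
        (poch (z + a) k *
          ∏ j ∈ Finset.range c,
            (z + a - (c : MvPolynomial (Fin 2) ℂ) + (j : MvPolynomial (Fin 2) ℂ))) *
        (poch (z - (c : MvPolynomial (Fin 2) ℂ)) k *
          ∏ j ∈ Finset.range (2 * c),
            (z + (k : MvPolynomial (Fin 2) ℂ) - (c : MvPolynomial (Fin 2) ℂ) +
              (j : MvPolynomial (Fin 2) ℂ))) := by rw [r1, r2, r3]
    _ = _ := by ring
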